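/- arXiv:2109.01026 — 2 statements merged into one kernel-verified Lean document; each statement's English description precedes it below -/
import Mathlib

section
/- Let p ∈ (1,2). There exists a constant C = C(p) > 0 such that for all v₁, v₂ ∈ ℝⁿ: |v₁ − v₂| ≤ C |v₁|^{(2−p)/2} [Φ(v₁,v₂)]^{1/2} + C [Φ(v₁,v₂)]^{1/p}. -/
open MeasureTheory

/-- `Φ(η₁,η₂) = (|η₁|² + |η₂|²)^{(p-2)/2} |η₁ - η₂|²` (with `Φ(0,0) = 0`, which
is automatic for the real power `0 ^ ((p-2)/2) = 0` when `p ≠ 2`). -/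
noncomputable def phiP (p : ℝ) {n : ℕ} (η₁ η₂ : EuclideanSpace ℝ (Fin n)) : ℝ :=
  (‖η₁‖ ^ 2 + ‖η₂‖ ^ 2) ^ ((p - 2) / 2) * ‖η₁ - η₂‖ ^ 2

lemma aux_key (p a b d : ℝ) (hp1 : 1 < p) (hp2 : p < 2) (ha : 0 ≤ a)
    (hb : 0 ≤ b) (hd : 0 ≤ d) (htri : b ≤ a + d) (htri2 : d ≤ a + b) :
    d ≤ 5 * a ^ ((2 - p) / 2) * ((a ^ 2 + b ^ 2) ^ ((p - 2) / 2) * d ^ 2) ^ ((1 : ℝ) / 2)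
      + 5 * ((a ^ 2 + b ^ 2) ^ ((p - 2) / 2) * d ^ 2) ^ (1 / p) := by
  have hs : (0:ℝ) ≤ a ^ 2 + b ^ 2 := by positivity
  have hΦ : (0:ℝ) ≤ (a ^ 2 + b ^ 2) ^ ((p - 2) / 2) * d ^ 2 := by positivity
  rcases le_or_gt b (2 * a) with hcase | hcase
  · -- b ≤ 2a
    rcases ha.eq_or_lt with h0 | ha'
    · -- a = 0, hence b = 0, d = 0
      have hb0 : b = 0 := le_antisymm (by linarith) hb
      have hd0 : d = 0 := le_antisymm (by linarith) hd
      subst hd0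
      have t1 : (0:ℝ) ≤ 5 * a ^ ((2 - p) / 2) *
          ((a ^ 2 + b ^ 2) ^ ((p - 2) / 2) * (0:ℝ) ^ 2) ^ ((1 : ℝ) / 2) := by positivity
      have t2 : (0:ℝ) ≤ 5 * ((a ^ 2 + b ^ 2) ^ ((p - 2) / 2) * (0:ℝ) ^ 2) ^ (1 / p) := by
        positivity
      linarith
    · -- 0 < a
      have hs0 : (0:ℝ) < a ^ 2 + b ^ 2 := by positivity
      have hs5 : a ^ 2 + b ^ 2 ≤ 5 * a ^ 2 := by nlinarith
      have h1 : (5 * a ^ 2 : ℝ) ^ ((p - 2) / 4) ≤ (a ^ 2 + b ^ 2) ^ ((p - 2) / 4) :=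
        Real.rpow_le_rpow_of_nonpos hs0 hs5 (by linarith)
      have hΦhalf : ((a ^ 2 + b ^ 2) ^ ((p - 2) / 2) * d ^ 2) ^ ((1 : ℝ) / 2)
          = (a ^ 2 + b ^ 2) ^ ((p - 2) / 4) * d := by
        rw [Real.mul_rpow (Real.rpow_nonneg hs _) (by positivity),
          ← Real.rpow_natCast d 2, ← Real.rpow_mul hs, ← Real.rpow_mul hd,
          show (p - 2) / 2 * ((1:ℝ)/2) = (p - 2) / 4 by ring,
          show ((2:ℕ):ℝ) * ((1:ℝ)/2) = 1 by norm_num, Real.rpow_one]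
      have h2 : (5 * a ^ 2 : ℝ) ^ ((p - 2) / 4)
          = (5:ℝ) ^ ((p - 2) / 4) * a ^ ((p - 2) / 2) := by
        rw [Real.mul_rpow (by norm_num) (by positivity), ← Real.rpow_natCast a 2,
          ← Real.rpow_mul ha,
          show ((2:ℕ):ℝ) * ((p - 2) / 4) = (p - 2) / 2 by push_cast; ring]
      have hexp : a ^ ((2 - p) / 2) * a ^ ((p - 2) / 2) = 1 := by
        rw [← Real.rpow_add ha',
          show (2 - p) / 2 + (p - 2) / 2 = (0:ℝ) by ring, Real.rpow_zero]
      have h5 : (1:ℝ) ≤ (5:ℝ) * (5:ℝ) ^ ((p - 2) / 4) := by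
        have : (5:ℝ) * (5:ℝ) ^ ((p - 2) / 4) = (5:ℝ) ^ (1 + (p - 2) / 4) := by
          rw [Real.rpow_add (by norm_num), Real.rpow_one]
        rw [this]
        calc (1:ℝ) = (5:ℝ) ^ (0:ℝ) := by simp
        _ ≤ (5:ℝ) ^ (1 + (p - 2) / 4) :=
          Real.rpow_le_rpow_of_exponent_le (by norm_num) (by linarith)
      have hterm1 : d ≤ 5 * a ^ ((2 - p) / 2) *
          ((a ^ 2 + b ^ 2) ^ ((p - 2) / 2) * d ^ 2) ^ ((1 : ℝ) / 2) := by
        rw [hΦhalf]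
        have hA : (0:ℝ) ≤ a ^ ((2 - p) / 2) := Real.rpow_nonneg ha _
        calc d = 1 * d := (one_mul d).symm
        _ ≤ (5 * (5:ℝ) ^ ((p - 2) / 4)) * d := by
            apply mul_le_mul_of_nonneg_right h5 hd
        _ = 5 * a ^ ((2 - p) / 2) * ((5 * a ^ 2 : ℝ) ^ ((p - 2) / 4) * d) := by
            rw [h2]
            linear_combination (-5 * (5:ℝ) ^ ((p - 2) / 4) * d) * hexp
        _ ≤ 5 * a ^ ((2 - p) / 2) * ((a ^ 2 + b ^ 2) ^ ((p - 2) / 4) * d) := by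
            apply mul_le_mul_of_nonneg_left (mul_le_mul_of_nonneg_right h1 hd)
            positivity
      have hterm2 : (0:ℝ) ≤ 5 * ((a ^ 2 + b ^ 2) ^ ((p - 2) / 2) * d ^ 2) ^ (1 / p) := by
        positivity
      linarith
  · -- 2a < b
    have hb0 : 0 < b := by linarith
    have hd0 : 0 < d := by linarith
    have hs0 : (0:ℝ) < a ^ 2 + b ^ 2 := by positivity
    have hp0 : (0:ℝ) < p := by linarith
    have hs5 : a ^ 2 + b ^ 2 ≤ 5 * d ^ 2 := by nlinarith
    have h1 : (5 * d ^ 2 : ℝ) ^ ((p - 2) / 2) ≤ (a ^ 2 + b ^ 2) ^ ((p - 2) / 2) :=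
      Real.rpow_le_rpow_of_nonpos hs0 hs5 (by linarith)
    have h2 : (5 * d ^ 2 : ℝ) ^ ((p - 2) / 2) * d ^ 2
        = (5:ℝ) ^ ((p - 2) / 2) * d ^ p := by
      rw [Real.mul_rpow (by norm_num) (by positivity), ← Real.rpow_natCast d 2,
        ← Real.rpow_mul hd, mul_assoc, ← Real.rpow_add hd0,
        show ((2:ℕ):ℝ) * ((p - 2) / 2) + ((2:ℕ):ℝ) = p by push_cast; ring]
    have hΦge : (5:ℝ) ^ ((p - 2) / 2) * d ^ p
        ≤ (a ^ 2 + b ^ 2) ^ ((p - 2) / 2) * d ^ 2 := by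
      rw [← h2]
      exact mul_le_mul_of_nonneg_right h1 (by positivity)
    have h3 : ((5:ℝ) ^ ((p - 2) / 2) * d ^ p) ^ (1 / p)
        = (5:ℝ) ^ ((p - 2) / (2 * p)) * d := by
      rw [Real.mul_rpow (Real.rpow_nonneg (by norm_num) _) (Real.rpow_nonneg hd _),
        ← Real.rpow_mul (by norm_num : (0:ℝ) ≤ 5), ← Real.rpow_mul hd,
        show (p - 2) / 2 * (1 / p) = (p - 2) / (2 * p) by ring,
        show p * (1 / p) = 1 by field_simp, Real.rpow_one]
    have h4 : ((5:ℝ) ^ ((p - 2) / 2) * d ^ p) ^ (1 / p)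
        ≤ ((a ^ 2 + b ^ 2) ^ ((p - 2) / 2) * d ^ 2) ^ (1 / p) :=
      Real.rpow_le_rpow (by positivity) hΦge (by positivity)
    have h5 : (1:ℝ) ≤ (5:ℝ) * (5:ℝ) ^ ((p - 2) / (2 * p)) := by
      have he : (5:ℝ) * (5:ℝ) ^ ((p - 2) / (2 * p)) = (5:ℝ) ^ (1 + (p - 2) / (2 * p)) := by
        rw [Real.rpow_add (by norm_num), Real.rpow_one]
      rw [he]
      calc (1:ℝ) = (5:ℝ) ^ (0:ℝ) := by simp
      _ ≤ (5:ℝ) ^ (1 + (p - 2) / (2 * p)) := by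
          apply Real.rpow_le_rpow_of_exponent_le (by norm_num)
          have : (0:ℝ) < 2 * p := by linarith
          rw [← sub_nonneg]
          have : 1 + (p - 2) / (2 * p) - 0 = (3 * p - 2) / (2 * p) := by
            field_simp; ring
          rw [this]
          apply div_nonneg (by nlinarith) (by nlinarith)
    have hterm1 : (0:ℝ) ≤ 5 * a ^ ((2 - p) / 2) *
        ((a ^ 2 + b ^ 2) ^ ((p - 2) / 2) * d ^ 2) ^ ((1 : ℝ) / 2) := by positivity
    have hterm2 : d ≤ 5 * ((a ^ 2 + b ^ 2) ^ ((p - 2) / 2) * d ^ 2) ^ (1 / p) := by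
      calc d = 1 * d := (one_mul d).symm
      _ ≤ (5 * (5:ℝ) ^ ((p - 2) / (2 * p))) * d := mul_le_mul_of_nonneg_right h5 hd
      _ = 5 * ((5:ℝ) ^ ((p - 2) / 2) * d ^ p) ^ (1 / p) := by rw [h3]; ring
      _ ≤ 5 * ((a ^ 2 + b ^ 2) ^ ((p - 2) / 2) * d ^ 2) ^ (1 / p) := by
          apply mul_le_mul_of_nonneg_left h4 (by norm_num)
    linarith

/-- The pointwise inequality
`|v₁ - v₂| ≤ C |v₁|^{(2-p)/2} Φ(v₁,v₂)^{1/2} + C Φ(v₁,v₂)^{1/p}`,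
with constant `C = C(p)`. -/
theorem statement4 (p : ℝ) (hp1 : 1 < p) (hp2 : p < 2) :
    ∃ C : ℝ, 0 < C ∧ ∀ (n : ℕ) (v₁ v₂ : EuclideanSpace ℝ (Fin n)),
      ‖v₁ - v₂‖ ≤
        C * ‖v₁‖ ^ ((2 - p) / 2) * (phiP p v₁ v₂) ^ ((1 : ℝ) / 2) +
          C * (phiP p v₁ v₂) ^ (1 / p) := by
  refine ⟨5, by norm_num, fun n v₁ v₂ => ?_⟩
  have htri : ‖v₂‖ ≤ ‖v₁‖ + ‖v₁ - v₂‖ := by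
    have := norm_sub_norm_le v₁ v₂
    have := abs_norm_sub_norm_le v₁ v₂
    have h := norm_sub_le v₁ (v₁ - v₂)
    simpa using h
  have htri2 : ‖v₁ - v₂‖ ≤ ‖v₁‖ + ‖v₂‖ := norm_sub_le _ _
  exact aux_key p ‖v₁‖ ‖v₂‖ ‖v₁ - v₂‖ hp1 hp2 (norm_nonneg _) (norm_nonneg _)
    (norm_nonneg _) htri htri2
end

section
/- Let B ⊆ ℝⁿ be a measurable set, q > 0, ϑ ≥ 0 and Π > 0. Let w be a real-valued measurable function on B with ‖w‖_{L^{q,∞}(B)} < ∞, and let g : B → [0,∞) be measurable and satisfy ∫_{B ∩ {|w| ≤ k}} g dx ≤ Π k^ϑ for every k > 0. Then there exists a constant C = C(n,q,ϑ) > 0 such that ‖g‖_{L^{q/(q+ϑ),∞}(B)} ≤ C Π ‖w‖_{L^{q,∞}(B)}^ϑ. -/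
/-!
For every level `k > 0`, the set `{g > λ}` lies in `{|w| > k} ∪ ({|w| ≤ k} ∩ {g > λ})`. The first
piece has measure at most `(‖w‖ / k) ^ q` by the definition of the weak norm, the second at most
`Π k ^ ϑ / λ` by Markov's inequality and the truncated integral bound. Choosing `k` so that the two
terms agree, `k ^ (q + ϑ) = λ ‖w‖ ^ q / Π`, gives
`λ |{g > λ}| ^ ((q + ϑ) / q) ≤ 2 ^ ((q + ϑ) / q) Π ‖w‖ ^ ϑ`. The balancing needs `‖w‖ > 0`, so the
estimate is proved for every real `m > ‖w‖` in place of `‖w‖`, and then `m` decreases to `‖w‖`.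
-/

open MeasureTheory

/-- The Marcinkiewicz (weak Lebesgue) quasi-norm
`‖φ‖_{L^{q,∞}(B)} = sup_{λ>0} λ · ℒⁿ({x ∈ B : |φ x| > λ})^{1/q}`, valued in `ℝ≥0∞`. -/
noncomputable def weakNorm {n : ℕ} (q : ℝ) (B : Set (EuclideanSpace ℝ (Fin n)))
    (φ : EuclideanSpace ℝ (Fin n) → ℝ) : ENNReal :=
  ⨆ (lam : ℝ) (_ : 0 < lam),
    ENNReal.ofReal lam * (volume {x ∈ B | lam < |φ x|}) ^ (1 / q)

lemma exists_pos_mul_add_rpow_eq {q ϑ P lam m : ℝ} (hq : q ≠ 0) (hqϑ : q + ϑ ≠ 0)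
    (hP : 0 < P) (hlam : 0 < lam) (hm : 0 < m) :
    ∃ k > 0, lam * (P * k ^ ϑ / lam + (m / k) ^ q) ^ ((q + ϑ) / q)
      = 2 ^ ((q + ϑ) / q) * P * m ^ ϑ := by
  set t := lam * m ^ q / P
  have ht : 0 < t := by positivity
  set k := t ^ (q + ϑ)⁻¹
  have hk : 0 < k := by positivity
  have hkpow : k ^ q * k ^ ϑ = t := by
    rw [← Real.rpow_add hk, ← Real.rpow_mul ht.le, inv_mul_cancel₀ hqϑ, Real.rpow_one]
  have hbalance : P * k ^ ϑ / lam = (m / k) ^ q := by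
    rw [Real.div_rpow hm.le hk.le, div_eq_div_iff hlam.ne' (by positivity)]
    calc P * k ^ ϑ * k ^ q = P * t := by rw [← hkpow]; ring
      _ = m ^ q * lam := by simp only [t]; field_simp
  refine ⟨k, hk, ?_⟩
  rw [hbalance, ← two_mul, Real.mul_rpow zero_le_two (by positivity),
    ← Real.rpow_mul (by positivity), mul_div_cancel₀ _ hq, Real.div_rpow hm.le hk.le,
    Real.rpow_add hk, hkpow, Real.rpow_add hm]
  simp only [t]
  field_simp

section LevelSets

variable {α : Type*} [MeasurableSpace α] {μ : Measure α} {B : Set α} {w g : α → ℝ}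

lemma measure_lt_abs_le_div_add_measure (hg : AEMeasurable g (μ.restrict B))
    (hg0 : ∀ x ∈ B, 0 ≤ g x) {lam k : ℝ} (hlam : 0 < lam) {A : ENNReal}
    (hA : ∫⁻ x in B ∩ {x | |w x| ≤ k}, ENNReal.ofReal (g x) ∂μ ≤ A) :
    μ {x ∈ B | lam < |g x|} ≤ A / ENNReal.ofReal lam + μ {x ∈ B | k < |w x|} := by
  have hsub : {x ∈ B | lam < |g x|} ⊆
      ({x | ENNReal.ofReal lam ≤ ENNReal.ofReal (g x)} ∩ (B ∩ {x | |w x| ≤ k})) ∪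
        {x ∈ B | k < |w x|} := by
    rintro x ⟨hxB, hx⟩
    rcases le_or_gt |w x| k with hwx | hwx
    · rw [abs_of_nonneg (hg0 x hxB)] at hx
      exact Or.inl ⟨ENNReal.ofReal_le_ofReal hx.le, hxB, hwx⟩
    · exact Or.inr ⟨hxB, hwx⟩
  have hmarkov : μ ({x | ENNReal.ofReal lam ≤ ENNReal.ofReal (g x)} ∩ (B ∩ {x | |w x| ≤ k}))
      ≤ A / ENNReal.ofReal lam :=
    calc _ ≤ μ.restrict (B ∩ {x | |w x| ≤ k}) {x | ENNReal.ofReal lam ≤ ENNReal.ofReal (g x)} :=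
          Measure.le_restrict_apply _ _
      _ ≤ (∫⁻ x in B ∩ {x | |w x| ≤ k}, ENNReal.ofReal (g x) ∂μ) / ENNReal.ofReal lam :=
          meas_ge_le_lintegral_div
            (hg.mono_measure (Measure.restrict_mono Set.inter_subset_left le_rfl)).ennreal_ofReal
            (by simpa using hlam) ENNReal.ofReal_ne_top
      _ ≤ A / ENNReal.ofReal lam := by gcongr
  calc μ {x ∈ B | lam < |g x|} ≤ _ := measure_mono hsub
    _ ≤ _ := measure_union_le _ _
    _ ≤ _ := add_le_add_left hmarkov _

lemma ofReal_mul_measure_rpow_le {q ϑ P m : ℝ} (hq : 0 < q) (hqϑ : 0 < q + ϑ) (hP : 0 < P)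
    (hm : 0 < m)
    (hg : AEMeasurable g (μ.restrict B)) (hg0 : ∀ x ∈ B, 0 ≤ g x)
    (htail : ∀ k > 0, μ {x ∈ B | k < |w x|} ≤ ENNReal.ofReal ((m / k) ^ q))
    (hint : ∀ k > 0,
      ∫⁻ x in B ∩ {x | |w x| ≤ k}, ENNReal.ofReal (g x) ∂μ ≤ ENNReal.ofReal (P * k ^ ϑ))
    {lam : ℝ} (hlam : 0 < lam) :
    ENNReal.ofReal lam * μ {x ∈ B | lam < |g x|} ^ ((q + ϑ) / q)
      ≤ ENNReal.ofReal (2 ^ ((q + ϑ) / q) * P * m ^ ϑ) := by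
  obtain ⟨k, hk, hkey⟩ := exists_pos_mul_add_rpow_eq hq.ne' hqϑ.ne' hP hlam hm
  have hlevel : μ {x ∈ B | lam < |g x|} ≤ ENNReal.ofReal (P * k ^ ϑ / lam + (m / k) ^ q) := by
    rw [ENNReal.ofReal_add (by positivity) (by positivity), ENNReal.ofReal_div_of_pos hlam]
    exact (measure_lt_abs_le_div_add_measure hg hg0 hlam (hint k hk)).trans
      (add_le_add_right (htail k hk) _)
  calc ENNReal.ofReal lam * μ {x ∈ B | lam < |g x|} ^ ((q + ϑ) / q)
      ≤ ENNReal.ofReal lam * ENNReal.ofReal (P * k ^ ϑ / lam + (m / k) ^ q) ^ ((q + ϑ) / q) := by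
        gcongr
    _ = ENNReal.ofReal (2 ^ ((q + ϑ) / q) * P * m ^ ϑ) := by
        rw [ENNReal.ofReal_rpow_of_nonneg (by positivity) (by positivity),
          ← ENNReal.ofReal_mul hlam.le, hkey]

end LevelSets

section WeakNorm

variable {n : ℕ} {q : ℝ} {B : Set (EuclideanSpace ℝ (Fin n))} {φ : EuclideanSpace ℝ (Fin n) → ℝ}

lemma ofReal_mul_volume_rpow_le_weakNorm {k : ℝ} (hk : 0 < k) :
    ENNReal.ofReal k * volume {x ∈ B | k < |φ x|} ^ (1 / q) ≤ weakNorm q B φ :=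
  le_iSup₂ (f := fun (lam : ℝ) (_ : 0 < lam) =>
    ENNReal.ofReal lam * volume {x ∈ B | lam < |φ x|} ^ (1 / q)) k hk

lemma volume_lt_abs_le_of_weakNorm_le (hq : 0 < q) {m : ℝ} (hm0 : 0 ≤ m)
    (hm : weakNorm q B φ ≤ ENNReal.ofReal m) {k : ℝ} (hk : 0 < k) :
    volume {x ∈ B | k < |φ x|} ≤ ENNReal.ofReal ((m / k) ^ q) := by
  have hroot : volume {x ∈ B | k < |φ x|} ^ q⁻¹ ≤ ENNReal.ofReal (m / k) := by
    rw [ENNReal.ofReal_div_of_pos hk,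
      ENNReal.le_div_iff_mul_le (Or.inl (by simpa using hk)) (Or.inl ENNReal.ofReal_ne_top),
      mul_comm, ← one_div]
    exact (ofReal_mul_volume_rpow_le_weakNorm hk).trans hm
  calc volume {x ∈ B | k < |φ x|} = (volume {x ∈ B | k < |φ x|} ^ q⁻¹) ^ q :=
        (ENNReal.rpow_inv_rpow hq.ne' _).symm
    _ ≤ ENNReal.ofReal (m / k) ^ q := by gcongr
    _ = ENNReal.ofReal ((m / k) ^ q) := ENNReal.ofReal_rpow_of_nonneg (by positivity) hq.le

end WeakNorm

lemma le_ofReal_mul_rpow_of_forall_gt {x : ENNReal} {c ϑ m₀ : ℝ} (hϑ : 0 ≤ ϑ)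
    (h : ∀ m, m₀ < m → x ≤ ENNReal.ofReal (c * m ^ ϑ)) :
    x ≤ ENNReal.ofReal (c * m₀ ^ ϑ) :=
  have hcont : Continuous fun m : ℝ ↦ ENNReal.ofReal (c * m ^ ϑ) :=
    ENNReal.continuous_ofReal.comp (continuous_const.mul (Real.continuous_rpow_const hϑ))
  ge_of_tendsto (hcont.tendsto m₀ |>.mono_left nhdsWithin_le_nhds)
    (eventually_nhdsWithin_of_forall (s := Set.Ioi m₀) h)

/-- Lemma 3.2 of the paper: if `∫_{B ∩ {|w| ≤ k}} g ≤ Π k^ϑ` for all `k > 0` and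
`w ∈ L^{q,∞}(B)`, then `‖g‖_{L^{q/(q+ϑ),∞}(B)} ≤ C Π ‖w‖_{L^{q,∞}(B)}^ϑ`. -/
theorem statement6 (n : ℕ) (q ϑ : ℝ) (hq : 0 < q) (hϑ : 0 ≤ ϑ) :
    ∃ C : ℝ, 0 < C ∧
      ∀ (B : Set (EuclideanSpace ℝ (Fin n))) (PP : ℝ)
        (w g : EuclideanSpace ℝ (Fin n) → ℝ),
        MeasurableSet B → 0 < PP →
        AEMeasurable w (volume.restrict B) → AEMeasurable g (volume.restrict B) →
        (∀ x ∈ B, 0 ≤ g x) →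
        weakNorm q B w ≠ ⊤ →
        (∀ k : ℝ, 0 < k →
          ∫⁻ x in B ∩ {x | |w x| ≤ k}, ENNReal.ofReal (g x) ≤
            ENNReal.ofReal (PP * k ^ ϑ)) →
        weakNorm (q / (q + ϑ)) B g ≤ ENNReal.ofReal (C * PP) * (weakNorm q B w) ^ ϑ := by
  refine ⟨2 ^ ((q + ϑ) / q), by positivity, ?_⟩
  intro B PP w g _ hPP _ hg hg0 hw hint
  set m₀ := (weakNorm q B w).toReal
  rw [weakNorm, one_div_div]
  refine iSup₂_le fun lam hlam ↦ ?_
  calc ENNReal.ofReal lam * volume {x ∈ B | lam < |g x|} ^ ((q + ϑ) / q)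
      ≤ ENNReal.ofReal (2 ^ ((q + ϑ) / q) * PP * m₀ ^ ϑ) := by
        refine le_ofReal_mul_rpow_of_forall_gt hϑ fun m hm ↦ ?_
        have hm0 : 0 < m := ENNReal.toReal_nonneg.trans_lt hm
        have hwm : weakNorm q B w ≤ ENNReal.ofReal m :=
          (ENNReal.le_ofReal_iff_toReal_le hw hm0.le).mpr hm.le
        exact ofReal_mul_measure_rpow_le hq (by linarith) hPP hm0 hg hg0
          (fun k hk ↦ volume_lt_abs_le_of_weakNorm_le hq hm0.le hwm hk) hint hlam
    _ = ENNReal.ofReal (2 ^ ((q + ϑ) / q) * PP) * weakNorm q B w ^ ϑ := by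
        rw [ENNReal.ofReal_mul (by positivity),
          ← ENNReal.ofReal_rpow_of_nonneg ENNReal.toReal_nonneg hϑ, ENNReal.ofReal_toReal hw]
end
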